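/- Let G be a finite simple graph with vertex set {t_1,…,t_s}, s ≥ 1, and let W_G be its whisker graph, the graph on vertex set {t_1,…,t_s,u_1,…,u_s} whose edges are the edges of G together with {t_i,u_i} for i = 1,…,s. Then v(I(W_G)) = i(G), where i(G) = min{ |A| : A a maximal stable set of G } is the independent domination number of G and I(W_G) is the edge ideal of W_G in K[t_1,…,t_s,u_1,…,u_s]. -/

import Mathlib

open MvPolynomial

attribute [local instance] Classical.propDecidable

/-- The v-number of a graded ideal `I` of a polynomial ring: the least `d ≥ 1` such that
there is a homogeneous polynomial `f` of degree `d` and an associated prime `p` of `S/I`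
with `(I : f) = p`; by convention it is `0` when `I` is the ideal generated by the variables. -/
noncomputable def vNumber {K : Type*} [Field K] {σ : Type*}
    (I : Ideal (MvPolynomial σ K)) : ℕ :=
  if I = Ideal.span (Set.range (X : σ → MvPolynomial σ K)) then 0
  else sInf {d : ℕ | 1 ≤ d ∧ ∃ f : MvPolynomial σ K, f.IsHomogeneous d ∧
    ∃ p ∈ associatedPrimes (MvPolynomial σ K) (MvPolynomial σ K ⧸ I),
      Submodule.colon I (Ideal.span {f}) = p}

/-- A squarefree monomial ideal: an ideal generated by squarefree monomials,
i.e. by products of distinct variables. -/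
def IsSquarefreeMonomialIdeal {K : Type*} [Field K] {σ : Type*}
    (I : Ideal (MvPolynomial σ K)) : Prop :=
  ∃ E : Set (Finset σ), I = Ideal.span ((fun e : Finset σ => ∏ i ∈ e, X i) '' E)

/-- A clutter on the vertex set `Fin s`: a family of edges, none of which contains another. -/
structure Clutter (s : ℕ) where
  edges : Finset (Finset (Fin s))
  antichain : ∀ e ∈ edges, ∀ f ∈ edges, e ⊆ f → e = f

namespace Clutter

variable {s : ℕ} (C : Clutter s)

/-- The edge ideal of a clutter. -/
noncomputable def edgeIdeal (K : Type*) [Field K] : Ideal (MvPolynomial (Fin s) K) :=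
  Ideal.span ((fun e : Finset (Fin s) => ∏ i ∈ e, X i) '' C.edges)

/-- A stable (independent) set of a clutter: a set of vertices containing no edge. -/
def Stable (A : Finset (Fin s)) : Prop := ∀ e ∈ C.edges, ¬ (e ⊆ A)

/-- A maximal stable set of a clutter. -/
def MaximalStable (A : Finset (Fin s)) : Prop :=
  C.Stable A ∧ ∀ B : Finset (Fin s), C.Stable B → A ⊆ B → A = B

/-- The neighbor set `N_C(A)`: all vertices `i` such that `{i} ∪ A` contains an edge. -/
noncomputable def neighborSet (A : Finset (Fin s)) : Finset (Fin s) :=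
  Finset.univ.filter (fun i => ∃ e ∈ C.edges, e ⊆ insert i A)

/-- A vertex cover of a clutter: a set of vertices meeting every edge. -/
def IsVertexCover (B : Finset (Fin s)) : Prop := ∀ e ∈ C.edges, ∃ i ∈ e, i ∈ B

/-- A minimal vertex cover: a vertex cover minimal with respect to inclusion. -/
def IsMinimalVertexCover (B : Finset (Fin s)) : Prop :=
  C.IsVertexCover B ∧ ∀ B' ⊂ B, ¬ C.IsVertexCover B'

/-- The independence number `β₀(C)`: the maximum size of a stable set. -/
noncomputable def indepNum : ℕ := sSup {n : ℕ | ∃ A : Finset (Fin s), C.Stable A ∧ A.card = n}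

/-- The independent domination number `i(C)`: the minimum size of a maximal stable set. -/
noncomputable def idomNum : ℕ :=
  sInf {n : ℕ | ∃ A : Finset (Fin s), C.MaximalStable A ∧ A.card = n}

/-- The vertex covering number `α₀(C)`: the minimum size of a vertex cover. -/
noncomputable def coverNum : ℕ :=
  sInf {n : ℕ | ∃ B : Finset (Fin s), C.IsVertexCover B ∧ B.card = n}

/-- The ideal of covers of a clutter, generated by the monomials of the minimal vertex covers. -/
noncomputable def coverIdeal (K : Type*) [Field K] : Ideal (MvPolynomial (Fin s) K) :=
  Ideal.span ((fun B : Finset (Fin s) => ∏ i ∈ B, X i) '' {B | C.IsMinimalVertexCover B})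

/-- The clutter is well-covered if every maximal stable set has maximum cardinality `β₀(C)`. -/
def WellCovered : Prop := ∀ A : Finset (Fin s), C.MaximalStable A → A.card = C.indepNum

/-- Deletion of an edge from a clutter. -/
def deleteEdge (e : Finset (Fin s)) : Clutter s :=
  ⟨C.edges.erase e, fun a ha b hb hab =>
    C.antichain a (Finset.mem_of_mem_erase ha) b (Finset.mem_of_mem_erase hb) hab⟩

/-- An edge-critical clutter: deleting any edge increases the independence number. -/
def EdgeCritical : Prop := ∀ e ∈ C.edges, C.indepNum < (C.deleteEdge e).indepNum

end Clutter

section Graphs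

variable {V : Type*}

/-- The edge ideal of a simple graph. -/
noncomputable def gEdgeIdeal (K : Type*) [Field K] (G : SimpleGraph V) :
    Ideal (MvPolynomial V K) :=
  Ideal.span {m : MvPolynomial V K | ∃ i j : V, G.Adj i j ∧ m = X i * X j}

/-- A stable (independent) set of vertices of a graph. -/
def gStable (G : SimpleGraph V) (A : Finset V) : Prop := ∀ i ∈ A, ∀ j ∈ A, ¬ G.Adj i j

/-- A maximal stable set of a graph. -/
def gMaximalStable (G : SimpleGraph V) (A : Finset V) : Prop :=
  gStable G A ∧ ∀ B : Finset V, gStable G B → A ⊆ B → A = B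

/-- The independence number `β₀(G)`. -/
noncomputable def gIndepNum [Fintype V] (G : SimpleGraph V) : ℕ :=
  sSup {n : ℕ | ∃ A : Finset V, gStable G A ∧ A.card = n}

/-- A maximum stable set: a stable set of maximum cardinality `β₀(G)`. -/
def gMaximumStable [Fintype V] (G : SimpleGraph V) (A : Finset V) : Prop :=
  gStable G A ∧ A.card = gIndepNum G

/-- The independent domination number `i(G)`: minimum size of a maximal stable set. -/
noncomputable def gIdomNum (G : SimpleGraph V) : ℕ :=
  sInf {n : ℕ | ∃ A : Finset V, gMaximalStable G A ∧ A.card = n}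

/-- A well-covered graph: every maximal stable set is a maximum stable set. -/
def gWellCovered [Fintype V] (G : SimpleGraph V) : Prop :=
  ∀ A : Finset V, gMaximalStable G A → A.card = gIndepNum G

/-- The class `W₂`: graphs with at least two vertices in which any two disjoint stable sets
are contained in two disjoint maximum stable sets. -/
def W2 [Fintype V] (G : SimpleGraph V) : Prop :=
  2 ≤ Fintype.card V ∧ ∀ A B : Finset V, gStable G A → gStable G B → Disjoint A B →
    ∃ A' B' : Finset V, gMaximumStable G A' ∧ gMaximumStable G B' ∧ Disjoint A' B' ∧
      A ⊆ A' ∧ B ⊆ B'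

/-- The neighbor set of a set of vertices of a graph: all vertices adjacent to a vertex of `A`. -/
noncomputable def gNeighborSet [Fintype V] (G : SimpleGraph V) (A : Finset V) : Finset V :=
  Finset.univ.filter (fun i => ∃ j ∈ A, G.Adj i j)

/-- A vertex cover of a graph. -/
def gIsVertexCover (G : SimpleGraph V) (B : Finset V) : Prop :=
  ∀ i j : V, G.Adj i j → i ∈ B ∨ j ∈ B

/-- A minimal vertex cover of a graph. -/
def gIsMinimalVertexCover (G : SimpleGraph V) (B : Finset V) : Prop :=
  gIsVertexCover G B ∧ ∀ B' ⊂ B, ¬ gIsVertexCover G B'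

/-- An edge-critical graph: deleting any edge increases the independence number. -/
def gEdgeCritical [Fintype V] (G : SimpleGraph V) : Prop :=
  ∀ i j : V, G.Adj i j → gIndepNum G < gIndepNum (G.deleteEdges {s(i, j)})

end Graphs

/-- The whisker graph `W_G` of a graph `G` on `Fin s`: to each vertex `t i = Sum.inl i` a new
vertex `u i = Sum.inr i` and a new edge `{t i, u i}` are attached. -/
def whisker {s : ℕ} (G : SimpleGraph (Fin s)) : SimpleGraph (Fin s ⊕ Fin s) where
  Adj x y :=
    (∃ i j, G.Adj i j ∧ x = Sum.inl i ∧ y = Sum.inl j) ∨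
    (∃ i, (x = Sum.inl i ∧ y = Sum.inr i) ∨ (x = Sum.inr i ∧ y = Sum.inl i))
  symm := by
    constructor
    rintro x y (⟨i, j, h, rfl, rfl⟩ | ⟨i, ⟨rfl, rfl⟩ | ⟨rfl, rfl⟩⟩)
    · exact Or.inl ⟨j, i, h.symm, rfl, rfl⟩
    · exact Or.inr ⟨i, Or.inr ⟨rfl, rfl⟩⟩
    · exact Or.inr ⟨i, Or.inl ⟨rfl, rfl⟩⟩
  loopless := by
    constructor
    rintro x (⟨i, j, h, rfl, hy⟩ | ⟨i, ⟨rfl, hy⟩ | ⟨rfl, hy⟩⟩)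
    · cases hy; exact G.irrefl h
    · exact absurd hy (by simp)
    · exact absurd hy (by simp)

section VNumAux

variable {K : Type*} [Field K]

private lemma edge_le_iff' {V : Type*} {a b : V} (hab : a ≠ b) (m : V →₀ ℕ) :
    Finsupp.single a 1 + Finsupp.single b 1 ≤ m ↔ m a ≠ 0 ∧ m b ≠ 0 := by
  classical
  constructor
  · intro h
    have ha := Finsupp.le_def.mp h a
    have hb := Finsupp.le_def.mp h b
    rw [Finsupp.add_apply, Finsupp.single_eq_same,
      Finsupp.single_eq_of_ne' (Ne.symm hab), add_zero] at ha
    rw [Finsupp.add_apply, Finsupp.single_eq_same,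
      Finsupp.single_eq_of_ne' hab, zero_add] at hb
    exact ⟨by omega, by omega⟩
  · rintro ⟨ha, hb⟩
    have ha' : 1 ≤ m a := Nat.one_le_iff_ne_zero.mpr ha
    have hb' : 1 ≤ m b := Nat.one_le_iff_ne_zero.mpr hb
    rw [Finsupp.le_def]
    intro i
    rw [Finsupp.add_apply]
    by_cases h1 : a = i
    · subst h1
      rw [Finsupp.single_eq_same, Finsupp.single_eq_of_ne' (Ne.symm hab)]
      omega
    · by_cases h2 : b = i
      · subst h2
        rw [Finsupp.single_eq_of_ne' h1, Finsupp.single_eq_same]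
        omega
      · rw [Finsupp.single_eq_of_ne' h1, Finsupp.single_eq_of_ne' h2]
        omega

private lemma gStable_subset' {V : Type*} {G : SimpleGraph V} {A B : Finset V}
    (hB : gStable G B) (h : A ⊆ B) : gStable G A :=
  fun i hi j hj => hB i (h hi) j (h hj)

private lemma exists_maximal_stable_between {V : Type*} [DecidableEq V] (G : SimpleGraph V)
    (A₀ U : Finset V) (h0 : gStable G A₀) (hAU : A₀ ⊆ U) :
    ∃ S : Finset V, A₀ ⊆ S ∧ S ⊆ U ∧ gStable G S ∧
      ∀ v ∈ U, v ∉ S → ¬ gStable G (insert v S) := by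
  classical
  set F := U.powerset.filter (fun S => A₀ ⊆ S ∧ gStable G S) with hF
  have hA₀F : A₀ ∈ F := by
    rw [hF, Finset.mem_filter, Finset.mem_powerset]
    exact ⟨hAU, subset_refl _, h0⟩
  obtain ⟨S, hSF, hmax⟩ := F.exists_max_image Finset.card ⟨A₀, hA₀F⟩
  rw [hF, Finset.mem_filter, Finset.mem_powerset] at hSF
  refine ⟨S, hSF.2.1, hSF.1, hSF.2.2, ?_⟩
  intro v hvU hvS hstab
  have hmem : insert v S ∈ F := by
    rw [hF, Finset.mem_filter, Finset.mem_powerset]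
    exact ⟨Finset.insert_subset hvU hSF.1, hSF.2.1.trans (Finset.subset_insert _ _), hstab⟩
  have := hmax _ hmem
  rw [Finset.card_insert_of_notMem hvS] at this
  omega

private lemma exists_gMaximalStable {V : Type*} [Fintype V] [DecidableEq V]
    (G : SimpleGraph V) : ∃ S : Finset V, gMaximalStable G S := by
  obtain ⟨S, -, -, hst, hmax⟩ := exists_maximal_stable_between G ∅ Finset.univ
    (fun i hi => absurd hi (Finset.notMem_empty i)) (Finset.empty_subset _)
  refine ⟨S, hst, fun B hB hSB => ?_⟩
  by_contra hne
  obtain ⟨v, hvB, hvS⟩ := Finset.exists_of_ssubset (hSB.ssubset_of_ne hne)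
  exact hmax v (Finset.mem_univ v) hvS (gStable_subset' hB (Finset.insert_subset hvB hSB))

private lemma X_mul_X {σ : Type*} (a b : σ) :
    (X a * X b : MvPolynomial σ K) = monomial (Finsupp.single a 1 + Finsupp.single b 1) 1 := by
  rw [← pow_one (X a : MvPolynomial σ K), ← pow_one (X b : MvPolynomial σ K),
    X_pow_eq_monomial, X_pow_eq_monomial, monomial_mul, one_mul]

private lemma mem_gEdgeIdeal_iff {V : Type*} (W : SimpleGraph V) (f : MvPolynomial V K) :
    f ∈ gEdgeIdeal K W ↔ ∀ m ∈ f.support, ∃ a b, W.Adj a b ∧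
      Finsupp.single a 1 + Finsupp.single b 1 ≤ m := by
  have hEq : gEdgeIdeal K W = Ideal.span ((fun e => monomial e (1 : K)) ''
      {e | ∃ a b, W.Adj a b ∧ e = Finsupp.single a 1 + Finsupp.single b 1}) := by
    unfold gEdgeIdeal
    congr 1
    ext m
    constructor
    · rintro ⟨i, j, hadj, rfl⟩
      exact ⟨_, ⟨i, j, hadj, rfl⟩, (X_mul_X i j).symm⟩
    · rintro ⟨e, ⟨i, j, hadj, rfl⟩, rfl⟩
      exact ⟨i, j, hadj, (X_mul_X i j).symm⟩
  rw [hEq, mem_ideal_span_monomial_image]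
  constructor
  · intro h m hm
    obtain ⟨e, ⟨a, b, hadj, rfl⟩, hle⟩ := h m hm
    exact ⟨a, b, hadj, hle⟩
  · intro h m hm
    obtain ⟨a, b, hadj, hle⟩ := h m hm
    exact ⟨_, ⟨a, b, hadj, rfl⟩, hle⟩

private lemma whisker_adj_inr {s : ℕ} {G : SimpleGraph (Fin s)} {j : Fin s}
    {b : Fin s ⊕ Fin s} (h : (whisker G).Adj (Sum.inr j) b) : b = Sum.inl j := by
  rcases h with ⟨i, k, _, h1, _⟩ | ⟨i, ⟨h1, h2⟩ | ⟨h1, h2⟩⟩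
  · exact absurd h1 (by simp)
  · exact absurd h1 (by simp)
  · cases h1; exact h2

private lemma whisker_adj_inl {s : ℕ} {G : SimpleGraph (Fin s)} {i : Fin s}
    {b : Fin s ⊕ Fin s} (h : (whisker G).Adj (Sum.inl i) b) :
    (∃ j, G.Adj i j ∧ b = Sum.inl j) ∨ b = Sum.inr i := by
  rcases h with ⟨i', j', hadj, h1, h2⟩ | ⟨i', ⟨h1, h2⟩ | ⟨h1, h2⟩⟩
  · cases h1; exact Or.inl ⟨j', hadj, h2⟩
  · cases h1; exact Or.inr h2
  · exact absurd h1 (by simp)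

/-- The lower bound: any degree in the defining set of the v-number dominates `i(G)`. -/
private lemma gIdomNum_le_of_colon {s d : ℕ} (G : SimpleGraph (Fin s))
    (f : MvPolynomial (Fin s ⊕ Fin s) K) (hf : f.IsHomogeneous d)
    (p : Ideal (MvPolynomial (Fin s ⊕ Fin s) K)) (hp : p.IsPrime)
    (hcolon : Submodule.colon (gEdgeIdeal K (whisker G)) (Ideal.span {f}) = p) :
    gIdomNum G ≤ d := by
  classical
  have hIp : gEdgeIdeal K (whisker G) ≤ p := by
    rw [← hcolon]
    intro g hg
    exact Ideal.mem_colon_span_singleton.mpr (Ideal.mul_mem_right f _ hg)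
  have hfI : f ∉ gEdgeIdeal K (whisker G) := by
    intro h
    have h1 : (1 : MvPolynomial (Fin s ⊕ Fin s) K) ∈ p := by
      rw [← hcolon]
      exact Ideal.mem_colon_span_singleton.mpr (by simpa using h)
    exact hp.ne_top ((Ideal.eq_top_iff_one p).mpr h1)
  have hcover : ∀ a b, (whisker G).Adj a b →
      (X a : MvPolynomial (Fin s ⊕ Fin s) K) ∈ p ∨ (X b : MvPolynomial (Fin s ⊕ Fin s) K) ∈ p := by
    intro a b hab
    exact hp.mem_or_mem (hIp (Ideal.subset_span ⟨a, b, hab, rfl⟩))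
  obtain ⟨m, hm, hmI⟩ : ∃ m ∈ f.support, ∀ a b, (whisker G).Adj a b →
      ¬ (Finsupp.single a 1 + Finsupp.single b 1 ≤ m) := by
    have h2 := (mem_gEdgeIdeal_iff (whisker G) f).not.mp hfI
    push_neg at h2
    obtain ⟨m, hm, h3⟩ := h2
    exact ⟨m, hm, fun a b hadj hle => h3 a b hadj hle⟩
  have hmdeg : m.degree = d := by
    rw [Finsupp.degree_eq_weight_one]
    exact hf (MvPolynomial.mem_support_iff.mp hm)
  set At : Finset (Fin s) := Finset.univ.filter (fun i => m (Sum.inl i) ≠ 0) with hAt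
  set Au : Finset (Fin s) := Finset.univ.filter (fun i => m (Sum.inr i) ≠ 0) with hAu
  have hmemAt : ∀ i, i ∈ At ↔ m (Sum.inl i) ≠ 0 := fun i => by simp [hAt]
  have hmemAu : ∀ i, i ∈ Au ↔ m (Sum.inr i) ≠ 0 := fun i => by simp [hAu]
  have hstable : gStable G At := by
    intro i hi j hj hadj
    refine hmI (Sum.inl i) (Sum.inl j) (Or.inl ⟨i, j, hadj, rfl, rfl⟩) ?_
    refine (edge_le_iff' ?_ m).mpr ⟨(hmemAt i).mp hi, (hmemAt j).mp hj⟩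
    simpa using hadj.ne
  have hkey : ∀ x : Fin s ⊕ Fin s, (X x : MvPolynomial (Fin s ⊕ Fin s) K) ∈ p →
      ∃ b, (whisker G).Adj x b ∧ m b ≠ 0 := by
    intro x hx
    have hxf : X x * f ∈ gEdgeIdeal K (whisker G) := by
      rw [← hcolon] at hx
      exact Ideal.mem_colon_span_singleton.mp hx
    have hX : (X x : MvPolynomial (Fin s ⊕ Fin s) K) = monomial (Finsupp.single x 1) 1 := by
      rw [← pow_one (X x : MvPolynomial (Fin s ⊕ Fin s) K), X_pow_eq_monomial]
    have hsupp : m + Finsupp.single x 1 ∈ (X x * f).support := by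
      rw [MvPolynomial.mem_support_iff, mul_comm, hX, coeff_mul_monomial, mul_one]
      exact MvPolynomial.mem_support_iff.mp hm
    obtain ⟨a, b, hadj, hle⟩ := (mem_gEdgeIdeal_iff (whisker G) _).mp hxf _ hsupp
    have h2 := (edge_le_iff' hadj.ne _).mp hle
    by_cases hax : a = x
    · subst hax
      have hbx : b ≠ a := hadj.ne.symm
      have hb : m b ≠ 0 := by
        have := h2.2
        rwa [Finsupp.add_apply, Finsupp.single_eq_of_ne' (Ne.symm hbx), add_zero] at this
      exact ⟨b, hadj, hb⟩
    · by_cases hbx : b = x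
      · subst hbx
        have ha : m a ≠ 0 := by
          have := h2.1
          rwa [Finsupp.add_apply, Finsupp.single_eq_of_ne' (Ne.symm hax), add_zero] at this
        exact ⟨a, hadj.symm, ha⟩
      · exfalso
        have ha : m a ≠ 0 := by
          have := h2.1
          rwa [Finsupp.add_apply, Finsupp.single_eq_of_ne' (Ne.symm hax), add_zero] at this
        have hb : m b ≠ 0 := by
          have := h2.2
          rwa [Finsupp.add_apply, Finsupp.single_eq_of_ne' (Ne.symm hbx), add_zero] at this
        exact hmI a b hadj ((edge_le_iff' hadj.ne m).mpr ⟨ha, hb⟩)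
  have hdom : ∀ v : Fin s, v ∉ At → v ∉ Au → ∃ j ∈ At, G.Adj v j := by
    intro v hvt hvu
    have hadjw : (whisker G).Adj (Sum.inl v) (Sum.inr v) := Or.inr ⟨v, Or.inl ⟨rfl, rfl⟩⟩
    rcases hcover _ _ hadjw with hXl | hXr
    · obtain ⟨b, hadj, hmb⟩ := hkey _ hXl
      rcases whisker_adj_inl hadj with ⟨j, hGadj, rfl⟩ | rfl
      · exact ⟨j, (hmemAt j).mpr hmb, hGadj⟩
      · exact absurd ((hmemAu v).mpr hmb) hvu
    · obtain ⟨b, hadj, hmb⟩ := hkey _ hXr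
      have hb := whisker_adj_inr hadj
      subst hb
      exact absurd ((hmemAt v).mpr hmb) hvt
  have hcard : At.card + Au.card ≤ d := by
    have hsub : At.image Sum.inl ∪ Au.image Sum.inr ⊆ m.support := by
      intro x hx
      rw [Finset.mem_union] at hx
      rcases hx with hx | hx
      · obtain ⟨i, hi, rfl⟩ := Finset.mem_image.mp hx
        exact Finsupp.mem_support_iff.mpr ((hmemAt i).mp hi)
      · obtain ⟨i, hi, rfl⟩ := Finset.mem_image.mp hx
        exact Finsupp.mem_support_iff.mpr ((hmemAu i).mp hi)
    have hdisj2 : Disjoint (At.image Sum.inl) (Au.image (Sum.inr : Fin s → Fin s ⊕ Fin s)) := by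
      rw [Finset.disjoint_left]
      rintro x hx1 hx2
      obtain ⟨i, _, rfl⟩ := Finset.mem_image.mp hx1
      obtain ⟨j, -, h⟩ := Finset.mem_image.mp hx2
      exact Sum.inr_ne_inl h
    calc At.card + Au.card = (At.image Sum.inl ∪ Au.image Sum.inr).card := by
          rw [Finset.card_union_of_disjoint hdisj2,
            Finset.card_image_of_injective _ Sum.inl_injective,
            Finset.card_image_of_injective _ Sum.inr_injective]
      _ ≤ m.support.card := Finset.card_le_card hsub
      _ ≤ m.degree := by
          rw [Finsupp.degree, Finset.card_eq_sum_ones]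
          exact Finset.sum_le_sum (fun i hi =>
            Nat.one_le_iff_ne_zero.mpr (Finsupp.mem_support_iff.mp hi))
      _ = d := hmdeg
  obtain ⟨S, hAtS, hSsub, hSstable, hSmax⟩ := exists_maximal_stable_between G At (At ∪ Au)
    hstable Finset.subset_union_left
  have hSmaximal : gMaximalStable G S := by
    refine ⟨hSstable, fun B hB hSB => ?_⟩
    by_contra hne
    obtain ⟨v, hvB, hvS⟩ := Finset.exists_of_ssubset (hSB.ssubset_of_ne hne)
    by_cases hvU : v ∈ At ∪ Au
    · exact hSmax v hvU hvS (gStable_subset' hB (Finset.insert_subset hvB hSB))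
    · rw [Finset.mem_union] at hvU
      push_neg at hvU
      obtain ⟨j, hjAt, hadj⟩ := hdom v hvU.1 hvU.2
      exact hB v hvB j (hSB (hAtS hjAt)) hadj
  calc gIdomNum G ≤ S.card := Nat.sInf_le ⟨S, hSmaximal, rfl⟩
    _ ≤ (At ∪ Au).card := Finset.card_le_card hSsub
    _ ≤ At.card + Au.card := Finset.card_union_le _ _
    _ ≤ d := hcard

private lemma isPrime_span_X_image {σ : Type*} (T : Set σ) :
    (Ideal.span (X '' T : Set (MvPolynomial σ K))).IsPrime := by
  classical
  set φ : MvPolynomial σ K →ₐ[K] MvPolynomial σ K :=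
    aeval (fun v => if v ∈ T then 0 else X v) with hφ
  have hsub : ∀ g : MvPolynomial σ K,
      g - φ g ∈ Ideal.span (X '' T : Set (MvPolynomial σ K)) := by
    intro g
    induction g using MvPolynomial.induction_on with
    | C a => rw [hφ, aeval_C, MvPolynomial.algebraMap_eq, sub_self]; exact Ideal.zero_mem _
    | add p q hp hq =>
        have h : p + q - φ (p + q) = (p - φ p) + (q - φ q) := by rw [map_add]; ring
        rw [h]; exact Ideal.add_mem _ hp hq
    | mul_X p n hpn =>
        rw [map_mul, hφ, aeval_X]
        by_cases hn : n ∈ T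
        · rw [if_pos hn, mul_zero, sub_zero]
          exact Ideal.mul_mem_left _ p (Ideal.subset_span ⟨n, hn, rfl⟩)
        · rw [if_neg hn]
          have h : p * X n - φ p * X n = (p - φ p) * X n := by ring
          rw [← hφ, h]
          exact Ideal.mul_mem_right _ _ hpn
  have hker : Ideal.span (X '' T : Set (MvPolynomial σ K)) = RingHom.ker φ := by
    apply le_antisymm
    · rw [Ideal.span_le]
      rintro g ⟨v, hv, rfl⟩
      rw [SetLike.mem_coe, RingHom.mem_ker, hφ, aeval_X, if_pos hv]
    · intro g hg
      rw [RingHom.mem_ker] at hg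
      have h := hsub g
      rwa [hg, sub_zero] at h
  rw [hker]
  exact RingHom.ker_isPrime _

private lemma prod_X_eq_monomial'' {σ τ : Type*} [DecidableEq τ] (A : Finset τ) (g : τ → σ) :
    (∏ i ∈ A, X (g i) : MvPolynomial σ K) =
      monomial (∑ i ∈ A, Finsupp.single (g i) 1) 1 := by
  induction A using Finset.induction_on with
  | empty => rw [Finset.prod_empty, Finset.sum_empty]; simp
  | @insert a A' h ih =>
      rw [Finset.prod_insert h, Finset.sum_insert h, ih]
      have hX : (X (g a) : MvPolynomial σ K) = monomial (Finsupp.single (g a) 1) 1 := by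
        rw [← pow_one (X (g a) : MvPolynomial σ K), X_pow_eq_monomial]
      rw [hX, monomial_mul, one_mul]

/-- The upper bound construction from a maximal stable set. -/
private lemma exists_witness {s : ℕ} (G : SimpleGraph (Fin s)) (A : Finset (Fin s))
    (hA : gMaximalStable G A) :
    ∃ f : MvPolynomial (Fin s ⊕ Fin s) K, f.IsHomogeneous A.card ∧
      ∃ p ∈ associatedPrimes (MvPolynomial (Fin s ⊕ Fin s) K)
        (MvPolynomial (Fin s ⊕ Fin s) K ⧸ gEdgeIdeal K (whisker G)),
        Submodule.colon (gEdgeIdeal K (whisker G)) (Ideal.span {f}) = p := by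
  classical
  set dA : (Fin s ⊕ Fin s) →₀ ℕ := ∑ i ∈ A, Finsupp.single (Sum.inl i) 1 with hdA
  set f : MvPolynomial (Fin s ⊕ Fin s) K := ∏ i ∈ A, X (Sum.inl i) with hf
  have hfmon : f = monomial dA 1 := by rw [hf, hdA]; exact prod_X_eq_monomial'' A _
  have hfhom : f.IsHomogeneous A.card := by
    rw [hf, Finset.card_eq_sum_ones]
    exact MvPolynomial.IsHomogeneous.prod A _ (fun _ => 1)
      (fun i _ => MvPolynomial.isHomogeneous_X _ _)
  set T : Set (Fin s ⊕ Fin s) := {x | Sum.elim (fun j => j ∉ A) (fun i => i ∈ A) x} with hT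
  set p := Ideal.span (X '' T : Set (MvPolynomial (Fin s ⊕ Fin s) K)) with hp
  have hprime : p.IsPrime := isPrime_span_X_image T
  have hdAl : ∀ j, dA (Sum.inl j) = if j ∈ A then 1 else 0 := by
    intro j
    rw [hdA, Finsupp.finset_sum_apply]
    simp [Finsupp.single_apply]
  have hdAr : ∀ j, dA (Sum.inr j) = 0 := by
    intro j
    rw [hdA, Finsupp.finset_sum_apply]
    simp [Finsupp.single_apply]
  have hedge : ∀ i ∈ A, ∀ x, (whisker G).Adj x (Sum.inl i) →
      X x * f ∈ gEdgeIdeal K (whisker G) := by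
    intro i hi x hadj
    have hmem : (X x * X (Sum.inl i) : MvPolynomial (Fin s ⊕ Fin s) K) ∈
        gEdgeIdeal K (whisker G) := Ideal.subset_span ⟨x, Sum.inl i, hadj, rfl⟩
    have h : X x * f = (X x * X (Sum.inl i)) * ∏ j ∈ A.erase i, X (Sum.inl j) := by
      rw [hf, ← Finset.mul_prod_erase _ _ hi]; ring
    rw [h]
    exact Ideal.mul_mem_right _ _ hmem
  have hcolon : Submodule.colon (gEdgeIdeal K (whisker G)) (Ideal.span {f}) = p := by
    apply le_antisymm
    · intro g hg
      have hgf : g * f ∈ gEdgeIdeal K (whisker G) := Ideal.mem_colon_span_singleton.mp hg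
      rw [hp, mem_ideal_span_X_image]
      intro m hm
      by_contra hcon
      push_neg at hcon
      have hsupp : m + dA ∈ (g * f).support := by
        rw [MvPolynomial.mem_support_iff, hfmon, coeff_mul_monomial, mul_one]
        exact MvPolynomial.mem_support_iff.mp hm
      obtain ⟨a, b, hadj, hle⟩ := (mem_gEdgeIdeal_iff (whisker G) _).mp hgf _ hsupp
      have h2 := (edge_le_iff' hadj.ne _).mp hle
      have hclass : ∀ x : Fin s ⊕ Fin s, (m + dA) x ≠ 0 →
          (∃ i, i ∈ A ∧ x = Sum.inl i) ∨ (∃ j, j ∉ A ∧ x = Sum.inr j) := by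
        rintro (j | j) hx
        · by_cases hj : j ∈ A
          · exact Or.inl ⟨j, hj, rfl⟩
          · exfalso
            have hmj : m (Sum.inl j) = 0 := hcon (Sum.inl j) hj
            rw [Finsupp.add_apply, hmj, hdAl, if_neg hj] at hx
            exact hx rfl
        · by_cases hj : j ∈ A
          · exfalso
            have hmj : m (Sum.inr j) = 0 := hcon (Sum.inr j) hj
            rw [Finsupp.add_apply, hmj, hdAr] at hx
            exact hx rfl
          · exact Or.inr ⟨j, hj, rfl⟩
      rcases hclass a h2.1 with ⟨i, hiA, rfl⟩ | ⟨j, hjA, rfl⟩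
      · rcases hclass b h2.2 with ⟨i', hi'A, rfl⟩ | ⟨j', hj'A, rfl⟩
        · rcases whisker_adj_inl hadj with ⟨j, hGadj, hj⟩ | hj
          · cases hj; exact hA.1 i hiA _ hi'A hGadj
          · exact absurd hj (by simp)
        · have hb := whisker_adj_inr hadj.symm
          cases hb
          exact hj'A hiA
      · have hb := whisker_adj_inr hadj
        subst hb
        rcases hclass _ h2.2 with ⟨i', hi'A, hj⟩ | ⟨j', hj'A, hj⟩
        · cases hj; exact hjA hi'A
        · exact absurd hj (by simp)
    · rw [hp, Ideal.span_le]
      rintro g ⟨v, hv, rfl⟩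
      rw [SetLike.mem_coe]
      rcases v with j | i
      · have hjA : j ∉ A := hv
        have hnotst : ¬ gStable G (insert j A) := by
          intro hst
          have h := hA.2 (insert j A) hst (Finset.subset_insert j A)
          exact hjA (h ▸ Finset.mem_insert_self j A)
        unfold gStable at hnotst
        push_neg at hnotst
        obtain ⟨x, hx, y, hy, hadj⟩ := hnotst
        rw [Finset.mem_insert] at hx hy
        have hnb : ∃ i ∈ A, G.Adj j i := by
          rcases hx with rfl | hx
          · rcases hy with rfl | hy
            · exact absurd hadj (G.irrefl)
            · exact ⟨y, hy, hadj⟩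
          · rcases hy with rfl | hy
            · exact ⟨x, hx, hadj.symm⟩
            · exact absurd hadj (hA.1 x hx y hy)
        obtain ⟨i, hiA, hGadj⟩ := hnb
        exact Ideal.mem_colon_span_singleton.mpr
          (hedge i hiA _ (Or.inl ⟨j, i, hGadj, rfl, rfl⟩))
      · have hiA : i ∈ A := hv
        exact Ideal.mem_colon_span_singleton.mpr
          (hedge i hiA _ (Or.inr ⟨i, Or.inr ⟨rfl, rfl⟩⟩))
  refine ⟨f, hfhom, p, ⟨hprime, Ideal.Quotient.mk (gEdgeIdeal K (whisker G)) f, ?_⟩, hcolon⟩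
  suffices hsuff : p = Submodule.colon ⊥ {Ideal.Quotient.mk (gEdgeIdeal K (whisker G)) f} by
    rw [← hsuff, hprime.radical]
  ext r
  rw [Submodule.mem_colon_singleton, Submodule.mem_bot]
  have hsmul : r • (Ideal.Quotient.mk (gEdgeIdeal K (whisker G)) f) =
      Ideal.Quotient.mk (gEdgeIdeal K (whisker G)) (r * f) := by
    rw [← Ideal.Quotient.mk_eq_mk, ← Ideal.Quotient.mk_eq_mk, ← Submodule.Quotient.mk_smul,
      smul_eq_mul]
  rw [hsmul, Ideal.Quotient.eq_zero_iff_mem, ← hcolon, Ideal.mem_colon_span_singleton]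

end VNumAux

/-- The v-number of the edge ideal of the whisker graph `W_G` equals the
independent domination number `i(G)` of `G`. -/
theorem vNumber_whisker_eq_idomNum {K : Type*} [Field K] {s : ℕ} (hs : 1 ≤ s)
    (G : SimpleGraph (Fin s)) :
    vNumber (gEdgeIdeal K (whisker G)) = gIdomNum G := by
  classical
  obtain ⟨S0, hS0⟩ := exists_gMaximalStable G
  have hne : {n : ℕ | ∃ A : Finset (Fin s), gMaximalStable G A ∧ A.card = n}.Nonempty :=
    ⟨S0.card, S0, hS0, rfl⟩
  obtain ⟨A, hA, hAcard⟩ := Nat.sInf_mem hne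
  have hAcard' : A.card = gIdomNum G := hAcard
  have hAne : A.Nonempty := by
    rcases Finset.eq_empty_or_nonempty A with rfl | h
    · exfalso
      set v : Fin s := ⟨0, hs⟩
      have hstv : gStable G {v} := by
        intro i hi j hj hadj
        rw [Finset.mem_singleton] at hi hj
        subst hi; subst hj
        exact G.irrefl hadj
      have h := hA.2 {v} hstv (Finset.empty_subset _)
      exact Finset.singleton_ne_empty v h.symm
    · exact h
  have hd1 : 1 ≤ gIdomNum G := by
    rw [← hAcard']
    exact Finset.card_pos.mpr hAne
  obtain ⟨f, hfhom, p, hpmem, hcolon⟩ := exists_witness (K := K) G A hA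
  rw [hAcard'] at hfhom
  have hInotX : gEdgeIdeal K (whisker G) ≠
      Ideal.span (Set.range (X : (Fin s ⊕ Fin s) → MvPolynomial (Fin s ⊕ Fin s) K)) := by
    intro h
    have hXmem : (X (Sum.inl ⟨0, hs⟩) : MvPolynomial (Fin s ⊕ Fin s) K) ∈
        gEdgeIdeal K (whisker G) := by
      rw [h]; exact Ideal.subset_span ⟨_, rfl⟩
    obtain ⟨a, b, hadj, hle⟩ := (mem_gEdgeIdeal_iff (whisker G) _).mp hXmem _
      (by rw [MvPolynomial.support_X]; exact Finset.mem_singleton_self _)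
    have h2 := (edge_le_iff' hadj.ne _).mp hle
    have ha : a = Sum.inl ⟨0, hs⟩ := by
      by_contra hne'
      exact h2.1 (Finsupp.single_eq_of_ne' (Ne.symm hne'))
    have hb : b = Sum.inl ⟨0, hs⟩ := by
      by_contra hne'
      exact h2.2 (Finsupp.single_eq_of_ne' (Ne.symm hne'))
    exact hadj.ne (ha.trans hb.symm)
  unfold vNumber
  rw [if_neg hInotX]
  apply le_antisymm
  · apply Nat.sInf_le
    exact ⟨hd1, f, hfhom, p, hpmem, hcolon⟩
  · apply le_csInf
    · exact ⟨gIdomNum G, hd1, f, hfhom, p, hpmem, hcolon⟩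
    · rintro d ⟨-, f', hf', p', hp'mem, hcolon'⟩
      exact gIdomNum_le_of_colon G f' hf' p' hp'mem.isPrime hcolon'
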